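/- arXiv:1505.08132 — 7 statements merged into one kernel-verified Lean document; each statement's English description precedes it below -/
import Mathlib

section
/- The sum of the k-th powers of all 2×2 matrices over Z/2Z equals the zero matrix if k = 1 or k ≡ 2, 3, 4 (mod 6), and equals the identity matrix if k > 1 and k ≡ 0, 1, 5 (mod 6). -/
/-!
Every `A : Matrix (Fin 2) (Fin 2) (ZMod 2)` satisfies `A ^ 8 = A ^ 2`: it is nilpotent, idempotent,
or lies in `GL₂(𝔽₂) ≅ S₃`, which has exponent 6. Hence for `k ≥ 2` the sum `S_k` depends only on
`k mod 6`, and it remains to compute `S_1` and `S_6, …, S_11` directly.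
-/

section EventuallyPeriodic

variable {M : Type*} [Monoid M] {a : M} {N p : ℕ}

theorem pow_add_mul_eq_pow_of_pow_add_eq (h : a ^ (N + p) = a ^ N) (i j : ℕ) :
    a ^ (N + i + j * p) = a ^ (N + i) := by
  induction j with
  | zero => simp
  | succ j ih =>
    calc a ^ (N + i + (j + 1) * p) = a ^ (N + p) * a ^ (i + j * p) := by
          rw [← pow_add]; ring_nf
      _ = a ^ (N + i + j * p) := by rw [h, ← pow_add, add_assoc]
      _ = a ^ (N + i) := ih

theorem pow_eq_pow_of_pow_add_eq (h : a ^ (N + p) = a ^ N) {m n : ℕ} (hm : N ≤ m) (hn : N ≤ n)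
    (hmn : m ≡ n [MOD p]) : a ^ m = a ^ n := by
  wlog hle : m ≤ n generalizing m n
  · exact (this hn hm hmn.symm (by omega)).symm
  obtain ⟨j, hj⟩ := (Nat.modEq_iff_dvd' hle).mp hmn
  obtain ⟨i, rfl⟩ := Nat.exists_eq_add_of_le hm
  have hn : n = N + i + j * p := by rw [mul_comm]; omega
  rw [hn, pow_add_mul_eq_pow_of_pow_add_eq h]

end EventuallyPeriodic

theorem Matrix.fin_two_zmod_two_pow_eight (A : Matrix (Fin 2) (Fin 2) (ZMod 2)) :
    A ^ 8 = A ^ 2 := by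
  revert A; decide

theorem sum_fin_two_zmod_two_pow_eq_sum_pow_mod_six_add_six {k : ℕ} (hk : 2 ≤ k) :
    ∑ A : Matrix (Fin 2) (Fin 2) (ZMod 2), A ^ k =
      ∑ A : Matrix (Fin 2) (Fin 2) (ZMod 2), A ^ (k % 6 + 6) := by
  have hmod : k ≡ k % 6 + 6 [MOD 6] := by unfold Nat.ModEq; omega
  exact Finset.sum_congr rfl fun A _ =>
    pow_eq_pow_of_pow_add_eq A.fin_two_zmod_two_pow_eight hk (by omega) hmod

theorem stmt_1_general (k : ℕ) :
    ((k = 1 ∨ k % 6 = 2 ∨ k % 6 = 3 ∨ k % 6 = 4) →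
      ∑ M : Matrix (Fin 2) (Fin 2) (ZMod 2), M ^ k = 0) ∧
    ((1 < k ∧ (k % 6 = 0 ∨ k % 6 = 1 ∨ k % 6 = 5)) →
      ∑ M : Matrix (Fin 2) (Fin 2) (ZMod 2), M ^ k = 1) := by
  constructor
  · rintro (rfl | h | h | h)
    · decide
    all_goals rw [sum_fin_two_zmod_two_pow_eq_sum_pow_mod_six_add_six (by omega), h]
    · decide
    · decide
    · set_option maxRecDepth 100000 in decide
  · rintro ⟨hk, h | h | h⟩ <;>
      rw [sum_fin_two_zmod_two_pow_eq_sum_pow_mod_six_add_six hk, h] <;> decide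

theorem stmt_1 (k : ℕ) (hk : 1 ≤ k) :
    ((k = 1 ∨ k % 6 = 2 ∨ k % 6 = 3 ∨ k % 6 = 4) →
      ∑ M : Matrix (Fin 2) (Fin 2) (ZMod 2), M ^ k = 0) ∧
    ((1 < k ∧ (k % 6 = 0 ∨ k % 6 = 1 ∨ k % 6 = 5)) →
      ∑ M : Matrix (Fin 2) (Fin 2) (ZMod 2), M ^ k = 1) :=
  stmt_1_general k
end

section
/- Let p be a prime, d ≥ 2, and s ≥ 1. Then Σ_{M ∈ M_d(Z/p^{s+1}Z)} M^k = p^{d^2} · π(Σ_{M ∈ M_d(Z/p^sZ)} M^k) in M_d(Z/p^{s+1}Z), interpreted via the congruence: the sum over M_d(Z/p^{s+1}Z) of M^k is congruent modulo p^{s+1} to p^{d^2} times any integer-matrix lift of the sum over M_d(Z/p^sZ) of M^k. -/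
/-! Write an entry of `Fin (m * n)` as `a + n * b` with `a < n` and `b < m`, so that a matrix over
`ZMod (m * n)` becomes `A + n • B`. When `m ∣ n` the perturbation `e = n • B` satisfies
`e * x * e = 0`, hence `(A + e) ^ k` is `A ^ k` plus terms linear in `e`. Those vanish after summing
over `B`: each entry of `∑ B, B` is `m ^ (d² - 1)` times `∑ b, b`, and `d² ≥ 2` makes `n • ∑ B, B`
zero modulo `m * n`. So summing over `B` just multiplies `A ^ k` by the number `m ^ d²` of
choices of `B`. -/

open Finset

theorem add_pow_eq_add_sum_of_mul_mul_eq_zero {R : Type*} [Ring R] (a : R) {e : R}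
    (he : ∀ x, e * x * e = 0) (k : ℕ) :
    (a + e) ^ k = a ^ k + ∑ i ∈ range k, a ^ i * e * a ^ (k - 1 - i) := by
  induction k with
  | zero => simp
  | succ k ih =>
    have h_left : e * ∑ i ∈ range k, a ^ i * e * a ^ (k - 1 - i) = 0 := by
      rw [mul_sum]
      exact sum_eq_zero fun i _ => by rw [← mul_assoc, ← mul_assoc, he, zero_mul]
    have h_shift : ∑ i ∈ range k, a ^ (i + 1) * e * a ^ (k + 1 - 1 - (i + 1)) =
        a * ∑ i ∈ range k, a ^ i * e * a ^ (k - 1 - i) := by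
      rw [mul_sum]
      refine sum_congr rfl fun i _ => ?_
      rw [show k + 1 - 1 - (i + 1) = k - 1 - i by omega, pow_succ', mul_assoc, mul_assoc,
        mul_assoc]
    rw [pow_succ', ih, sum_range_succ', h_shift]
    simp only [add_mul, mul_add, h_left, pow_succ', pow_zero, one_mul, Nat.add_sub_cancel,
      Nat.sub_zero]
    abel

theorem sum_add_pow_eq_card_nsmul {R β : Type*} [Ring R] [Fintype β] (a : R) (e : β → R)
    (he : ∀ b x, e b * x * e b = 0) (hsum : ∑ b, e b = 0) (k : ℕ) :
    ∑ b, (a + e b) ^ k = Fintype.card β • a ^ k := by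
  simp only [add_pow_eq_add_sum_of_mul_mul_eq_zero a (he _), sum_add_distrib, sum_const,
    card_univ, add_eq_left]
  rw [sum_comm]
  exact sum_eq_zero fun i _ => by simp only [← sum_mul, ← mul_sum, hsum, mul_zero, zero_mul]

theorem Matrix.sum_comp_apply {m n α M : Type*} [Fintype m] [Fintype n] [DecidableEq m]
    [DecidableEq n] [Fintype α] [AddCommMonoid M] (f : α → M) (i : m) (j : n) :
    ∑ X : Matrix m n α, f (X i j) =
      Fintype.card α ^ (Fintype.card m * Fintype.card n - 1) • ∑ a, f a := by
  calc ∑ X : Matrix m n α, f (X i j) = ∑ g : m × n → α, f (g (i, j)) :=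
        Fintype.sum_equiv (Equiv.curry m n α).symm _ _ fun _ => rfl
    _ = _ := by
      rw [← Fintype.piFinset_univ, Fintype.sum_piFinset_apply, card_univ, Fintype.card_prod]

theorem Matrix.sum_map_finProdFin {m n R M : Type*} [Fintype m] [Fintype n] [DecidableEq m]
    [DecidableEq n] [Semiring R] [AddCommMonoid M] (a b : ℕ) (F : Matrix m n R → M) :
    ∑ X : Matrix m n (Fin (a * b)), F (X.map fun x => ((x : ℕ) : R)) =
      ∑ B : Matrix m n (Fin a), ∑ A : Matrix m n (Fin b),
        F (A.map (fun x => ((x : ℕ) : R)) + (b : R) • B.map fun x => ((x : ℕ) : R)) := by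
  let split : Matrix m n (Fin a × Fin b) ≃ Matrix m n (Fin a) × Matrix m n (Fin b) :=
    { toFun := fun X => (X.map Prod.fst, X.map Prod.snd)
      invFun := fun BA i j => (BA.1 i j, BA.2 i j)
      left_inv := fun _ => rfl
      right_inv := fun _ => rfl }
  rw [← Fintype.sum_prod_type']
  refine (Fintype.sum_equiv (split.symm.trans (.arrowCongr (.refl m)
    (.arrowCongr (.refl n) finProdFinEquiv))) _ _ fun BA => congrArg F ?_).symm
  ext i j
  change _ + _ = (((BA.2 i j : ℕ) + b * (BA.1 i j : ℕ) : ℕ) : R)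
  simp

theorem Matrix.smul_sum_map_natCast_eq_zero {ι κ : Type*} [Fintype ι] [Fintype κ]
    [DecidableEq ι] [DecidableEq κ] (m n : ℕ) (h : 1 < Fintype.card ι * Fintype.card κ) :
    (n : ZMod (m * n)) • ∑ B : Matrix ι κ (Fin m), B.map (fun x => ((x : ℕ) : ZMod (m * n)))
      = 0 := by
  ext i j
  obtain ⟨c, hc⟩ := Nat.exists_eq_add_of_lt h
  have h_dvd : m * n ∣ n * m ^ (c + 1) := by
    rw [mul_comm m]
    exact mul_dvd_mul_left n (dvd_pow_self m c.succ_ne_zero)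
  simp only [Matrix.smul_apply, Matrix.sum_apply, Matrix.map_apply, smul_eq_mul,
    Matrix.zero_apply]
  rw [Matrix.sum_comp_apply (fun x : Fin m => ((x : ℕ) : ZMod (m * n))), Fintype.card_fin,
    show Fintype.card ι * Fintype.card κ - 1 = c + 1 by omega, nsmul_eq_mul, ← mul_assoc,
    ← Nat.cast_mul, (ZMod.natCast_eq_zero_iff _ _).2 h_dvd, zero_mul]

theorem Matrix.sum_map_finMul_pow {ι : Type*} [Fintype ι] [DecidableEq ι] {m n : ℕ}
    (hmn : m ∣ n) (hι : 1 < Fintype.card ι) (k : ℕ) :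
    ∑ X : Matrix ι ι (Fin (m * n)), (X.map fun x => ((x : ℕ) : ZMod (m * n))) ^ k =
      m ^ (Fintype.card ι ^ 2) • ∑ A : Matrix ι ι (Fin n),
        (A.map fun x => ((x : ℕ) : ZMod (m * n))) ^ k := by
  have h_sq : (n : ZMod (m * n)) * n = 0 := by
    rw [← Nat.cast_mul, ZMod.natCast_eq_zero_iff]
    exact mul_dvd_mul_right hmn n
  have h_card : Fintype.card (Matrix ι ι (Fin m)) = m ^ (Fintype.card ι ^ 2) := by
    rw [Fintype.card_eq_nat_card]
    simp [Matrix, sq, pow_mul]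
  rw [Matrix.sum_map_finProdFin m n (· ^ k), sum_comm, smul_sum]
  refine sum_congr rfl fun A _ => ?_
  rw [sum_add_pow_eq_card_nsmul _ _ (fun B x => ?_) ?_, h_card]
  · rw [← smul_sum]
    exact Matrix.smul_sum_map_natCast_eq_zero m n (by nlinarith)
  · rw [smul_mul_assoc, smul_mul_assoc, mul_smul_comm, smul_smul, h_sq, zero_smul]

theorem Matrix.intCast_sum_pow_apply {ι R β : Type*} [Fintype ι] [DecidableEq ι] [CommRing R]
    (s : Finset β) (M : β → Matrix ι ι ℤ) (k : ℕ) (i j : ι) :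
    (((∑ b ∈ s, M b ^ k) i j : ℤ) : R) = (∑ b ∈ s, (M b).map (↑) ^ k) i j := by
  rw [Matrix.sum_apply, Matrix.sum_apply, Int.cast_sum]
  exact sum_congr rfl fun b _ =>
    congrFun (congrFun (Matrix.map_pow (M b) (Int.castRingHom R) k) i) j

theorem stmt_4_general (p d s k : ℕ) (hd : 2 ≤ d) (hs : 1 ≤ s)
    (i j : Fin d) :
    (∑ M : Matrix (Fin d) (Fin d) (Fin (p ^ (s + 1))),
        (M.map fun x => ((x : ℕ) : ℤ)) ^ k) i j ≡
    (p : ℤ) ^ (d ^ 2) *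
      (∑ M : Matrix (Fin d) (Fin d) (Fin (p ^ s)),
        (M.map fun x => ((x : ℕ) : ℤ)) ^ k) i j [ZMOD (p ^ (s + 1))] := by
  have key := congrArg (· i j) (Matrix.sum_map_finMul_pow (ι := Fin d)
    (dvd_pow_self p (by omega : s ≠ 0)) (by simp; omega) k)
  rw [← pow_succ', Fintype.card_fin] at key
  rw [← Nat.cast_pow, ← ZMod.intCast_eq_intCast_iff, Int.cast_mul, Matrix.intCast_sum_pow_apply,
    Matrix.intCast_sum_pow_apply]
  simpa [Matrix.map_map, Function.comp_def] using key

theorem stmt_4 (p d s k : ℕ) (hp : p.Prime) (hd : 2 ≤ d) (hs : 1 ≤ s) (hk : 1 ≤ k)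
    (i j : Fin d) :
    (∑ M : Matrix (Fin d) (Fin d) (Fin (p ^ (s + 1))),
        (M.map fun x => ((x : ℕ) : ℤ)) ^ k) i j ≡
    (p : ℤ) ^ (d ^ 2) *
      (∑ M : Matrix (Fin d) (Fin d) (Fin (p ^ s)),
        (M.map fun x => ((x : ℕ) : ℤ)) ^ k) i j [ZMOD (p ^ (s + 1))] :=
  stmt_4_general p d s k hd hs i j
end

section
/- For any prime p, integers d ≥ 2, s ≥ 1, and k ≥ 1, the sum of the k-th powers of all d×d matrices over Z/p^sZ is the zero matrix, unless d = p = 2 and s = 1. -/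
/-!
Over a finite commutative ring of prime characteristic `q`, fix `a ≠ b`, `E = single a b 1` and
the transvection `u = 1 + E`. Translating by `E` on the centraliser of `E` and conjugating by `u`
off it is a fixed-point-free map whose `q`-th iterate is the identity, so every function
invariant under it sums to `0`, its orbits having `q` elements. Since `(M + E)^k = M^k + Y * E`
with `Y` commuting with `E`, both `(M^k) i j` for `i ≠ a`, `j ≠ b` and `trace (M^k)` are
invariant. This kills every entry of `∑ M^k` when `d ≥ 3`; for `d = 2` the off-diagonal entries
vanish and the trace, together with the symmetry of the diagonal, gives `2 • (∑ M^k) i i = 0`.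

Over `ZMod (p^(s+1))` with `s ≥ 1`, every matrix is uniquely `lift N + p^s • A` with `N` modulo
`p^s` and `A` modulo `p`. As `(p^s • A) * X * (p^s • A) = 0`, the expansion of the `k`-th power
is linear in `A`, and summing over all `A` leaves `p^(d*d) • ∑ (lift N)^k`, whose reduction
modulo `p^s` is the sum over `ZMod (p^s)`. Once `p` annihilates that sum, `p^2` annihilates
`∑ (lift N)^k`, so the sum over `ZMod (p^(s+1))` vanishes; `p` annihilates everything over
`ZMod p`, which starts the induction.
-/

open Finset Matrix

theorem sum_eq_zero_of_iterate_prime_eq_id {α A : Type*} [Fintype α] [DecidableEq α]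
    [AddCommMonoid A] {q : ℕ} (hq : q.Prime) (hA : ∀ x : A, q • x = 0) {σ : α → α}
    (hσ : σ^[q] = id) (hfree : ∀ x, σ x ≠ x) {f : α → A} (hf : ∀ x, f (σ x) = f x) :
    ∑ x, f x = 0 := by
  have hleft : Function.LeftInverse σ^[q - 1] σ := fun x => by
    rw [← Function.iterate_succ_apply, Nat.succ_eq_add_one, Nat.sub_add_cancel hq.one_le, hσ, id]
  let τ : Equiv.Perm α := Equiv.ofBijective σ (Finite.injective_iff_bijective.mp hleft.injective)
  have hτ : τ ^ q = 1 := by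
    ext x
    rw [Equiv.Perm.coe_pow]
    exact congrFun hσ x
  have hfτ : ∀ (i : ℕ) x, f ((τ ^ i) x) = f x := by
    intro i
    induction i with
    | zero => simp
    | succ i ih => intro x; rw [pow_succ', Equiv.Perm.mul_apply]; exact (hf _).trans (ih x)
  classical
  refine sum_cancels_of_partition_cancels (Equiv.Perm.SameCycle.setoid τ) fun x _ => ?_
  have hclass :
      univ.filter (fun y => (Equiv.Perm.SameCycle.setoid τ) y x) = (τ.cycleOf x).support := by
    ext y
    rw [mem_filter, Equiv.Perm.mem_support_cycleOf_iff' (hfree x)]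
    exact ⟨fun h => h.2.symm, fun h => ⟨mem_univ _, h.symm⟩⟩
  have hconst : ∀ y ∈ (τ.cycleOf x).support, f y = f x := by
    intro y hy
    obtain ⟨i, -, -, hi⟩ :=
      ((Equiv.Perm.mem_support_cycleOf_iff' (hfree x)).mp hy).exists_pow_eq τ
    rw [← hi, hfτ]
  have hcard : #(τ.cycleOf x).support = q := by
    have hdvd := (τ.orderOf_cycleOf_dvd_orderOf x).trans (orderOf_dvd_of_pow_eq_one hτ)
    rw [(τ.isCycle_cycleOf (hfree x)).orderOf] at hdvd
    exact (hq.eq_one_or_self_of_dvd _ hdvd).resolve_left (Equiv.Perm.card_support_ne_one _)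
  rw [hclass, sum_congr rfl hconst, sum_const, hcard, hA]

theorem Commute.exists_add_pow_eq {S : Type*} [Ring S] {x e : S} (h : Commute e x)
    (he : e * e = 0) (k : ℕ) : ∃ y, Commute e y ∧ (x + e) ^ k = x ^ k + y * e := by
  induction k with
  | zero => exact ⟨0, Commute.zero_right _, by simp⟩
  | succ k ih =>
    obtain ⟨y, hy, hk⟩ := ih
    refine ⟨x ^ k + y * x, (h.pow_right k).add_right (hy.mul_right h), ?_⟩
    rw [pow_succ, hk, pow_succ]
    simp only [add_mul, mul_add, mul_assoc, h.eq, he, mul_zero, add_zero]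
    abel

theorem add_pow_eq_of_mul_mul_eq_zero {S : Type*} [Ring S] (x y : S) (hy : ∀ z, y * z * y = 0)
    (k : ℕ) : (x + y) ^ k = x ^ k + ∑ t ∈ range k, x ^ t * y * x ^ (k - 1 - t) := by
  induction k with
  | zero => simp
  | succ k ih =>
    have hzero : ∑ t ∈ range k, y * (x ^ t * y * x ^ (k - 1 - t)) = 0 :=
      sum_eq_zero fun t _ => by rw [← mul_assoc, ← mul_assoc, hy, zero_mul]
    have hshift : ∀ t ∈ range k,
        x * (x ^ t * y * x ^ (k - 1 - t)) = x ^ (t + 1) * y * x ^ (k + 1 - 1 - (t + 1)) :=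
      fun t _ => by rw [show k + 1 - 1 - (t + 1) = k - 1 - t by omega, pow_succ', mul_assoc,
        mul_assoc, mul_assoc]
    rw [pow_succ', ih, mul_add, add_mul, add_mul, mul_sum, mul_sum, hzero, sum_range_succ',
      sum_congr rfl hshift, ← pow_succ']
    simp only [pow_zero, one_mul, Nat.add_sub_cancel, Nat.sub_zero, add_zero]
    abel

theorem Fintype.card_matrix (m n α : Type*) [Fintype m] [Fintype n] [DecidableEq m]
    [DecidableEq n] [Fintype α] :
    Fintype.card (Matrix m n α) = Fintype.card α ^ (Fintype.card m * Fintype.card n) := by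
  rw [Fintype.card_congr Matrix.of.symm, Fintype.card_fun, Fintype.card_fun, ← pow_mul, mul_comm]

namespace Matrix

section Transvection

variable {n R : Type*} [Fintype n] [DecidableEq n] [CommRing R] {a b : n}

theorem commute_single_transvection (hab : a ≠ b) (c : R) :
    Commute (single a b 1) (transvection a b c) := by
  simp [Commute, SemiconjBy, transvection, mul_add, add_mul,
    single_mul_single_of_ne _ _ _ _ hab.symm]

theorem conj_transvection_pow (hab : a ≠ b) (c : R) (M : Matrix n n R) (k : ℕ) :
    (transvection a b c * M * transvection a b (-c)) ^ k =
      transvection a b c * M ^ k * transvection a b (-c) :=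
  Units.conj_pow ⟨transvection a b c, transvection a b (-c),
    by rw [transvection_mul_transvection_same _ _ hab, add_neg_cancel, transvection_zero],
    by rw [transvection_mul_transvection_same _ _ hab, neg_add_cancel, transvection_zero]⟩ M k

theorem commute_single_conj_transvection_iff (hab : a ≠ b) (c : R) (M : Matrix n n R) :
    Commute (single a b 1) (transvection a b c * M * transvection a b (-c)) ↔
      Commute (single a b 1) M := by
  have hconj : ∀ (c : R) M, Commute (single a b 1) M →
      Commute (single a b 1) (transvection a b c * M * transvection a b (-c)) := fun c M h =>
    ((commute_single_transvection hab c).mul_right h).mul_right (commute_single_transvection hab _)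
  refine ⟨fun h => ?_, hconj c M⟩
  have := hconj (-c) _ h
  rwa [neg_neg, ← mul_assoc, ← mul_assoc, transvection_mul_transvection_same _ _ hab,
    neg_add_cancel, transvection_zero, one_mul, mul_assoc,
    transvection_mul_transvection_same _ _ hab, neg_add_cancel, transvection_zero, mul_one] at this

theorem commute_single_of_conj_transvection_eq (hab : a ≠ b) {M : Matrix n n R}
    (h : transvection a b 1 * M * transvection a b (-1) = M) :
    Commute (single a b 1) M := by
  have hu : Commute (transvection a b (1 : R)) M := by
    rw [commute_iff_eq]
    conv_rhs => rw [← h]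
    rw [mul_assoc, mul_assoc, transvection_mul_transvection_same _ _ hab, neg_add_cancel,
      transvection_zero, mul_one]
  simpa [transvection] using hu.sub_left (Commute.one_left M)

section ShiftOrConj

variable [DecidableEq R]

def shiftOrConj (a b : n) (M : Matrix n n R) : Matrix n n R :=
  if single a b 1 * M = M * single a b 1 then M + single a b 1
  else transvection a b 1 * M * transvection a b (-1)

theorem shiftOrConj_of_commute {M : Matrix n n R} (h : Commute (single a b 1) M) :
    shiftOrConj a b M = M + single a b 1 :=
  if_pos h

theorem shiftOrConj_of_not_commute {M : Matrix n n R} (h : ¬Commute (single a b 1) M) :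
    shiftOrConj a b M = transvection a b 1 * M * transvection a b (-1) :=
  if_neg h

theorem shiftOrConj_iterate_of_commute {M : Matrix n n R} (h : Commute (single a b 1) M)
    (t : ℕ) : (shiftOrConj a b)^[t] M = M + (t : R) • single a b 1 := by
  induction t with
  | zero => simp
  | succ t ih =>
    rw [Function.iterate_succ_apply', ih,
      shiftOrConj_of_commute (h.add_right ((Commute.refl _).smul_right _))]
    push_cast
    rw [add_smul, one_smul, add_assoc]

theorem shiftOrConj_iterate_of_not_commute (hab : a ≠ b) {M : Matrix n n R}
    (h : ¬Commute (single a b 1) M) (t : ℕ) :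
    (shiftOrConj a b)^[t] M = transvection a b (t : R) * M * transvection a b (-t : R) := by
  induction t with
  | zero => simp
  | succ t ih =>
    rw [Function.iterate_succ_apply', ih, shiftOrConj_of_not_commute
      (mt (commute_single_conj_transvection_iff hab _ M).mp h)]
    push_cast
    rw [← mul_assoc, ← mul_assoc, transvection_mul_transvection_same _ _ hab, mul_assoc,
      transvection_mul_transvection_same _ _ hab, add_comm (1 : R), neg_add]

end ShiftOrConj

theorem sum_eq_zero_of_transvection_invariant [Fintype R] (q : ℕ) [Fact q.Prime] [CharP R q]
    {A : Type*} [AddCommMonoid A]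
    (hA : ∀ x : A, q • x = 0) (hab : a ≠ b) (f : Matrix n n R → A)
    (hconj : ∀ M, f (transvection a b 1 * M * transvection a b (-1)) = f M)
    (hshift : ∀ M, Commute (single a b 1) M → f (M + single a b 1) = f M) :
    ∑ M, f M = 0 := by
  classical
  have : Nontrivial R := CharP.nontrivial_of_char_ne_one (Fact.out : q.Prime).one_lt.ne'
  refine sum_eq_zero_of_iterate_prime_eq_id Fact.out hA (σ := shiftOrConj a b)
    (funext fun M => ?_) (fun M hM => ?_) (fun M => ?_)
  · by_cases h : Commute (single a b 1) M
    · simp [shiftOrConj_iterate_of_commute h]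
    · simp [shiftOrConj_iterate_of_not_commute hab h]
  · by_cases h : Commute (single a b 1) M
    · rw [shiftOrConj_of_commute h, add_eq_left] at hM
      simpa using congrFun (congrFun hM a) b
    · exact h (commute_single_of_conj_transvection_eq hab (shiftOrConj_of_not_commute h ▸ hM))
  · by_cases h : Commute (single a b 1) M
    · rw [shiftOrConj_of_commute h, hshift M h]
    · rw [shiftOrConj_of_not_commute h, hconj]

theorem sum_pow_apply_eq_zero [Fintype R] (q : ℕ) [Fact q.Prime] [CharP R q] (k : ℕ) {i j : n}
    (hab : a ≠ b) (hi : i ≠ a) (hj : j ≠ b) :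
    ∑ M : Matrix n n R, (M ^ k) i j = 0 := by
  refine sum_eq_zero_of_transvection_invariant q
    (fun x => by rw [nsmul_eq_mul, CharP.cast_eq_zero, zero_mul]) hab _ (fun M => ?_)
    (fun M hM => ?_)
  · rw [conj_transvection_pow hab, mul_transvection_apply_of_ne _ _ _ _ hj,
      transvection_mul_apply_of_ne _ _ _ _ hi]
  · obtain ⟨y, -, hy⟩ := hM.exists_add_pow_eq (single_mul_single_of_ne _ _ _ _ hab.symm _) k
    rw [hy, add_apply, mul_single_apply_of_ne _ _ _ _ _ hj, add_zero]

theorem sum_trace_pow_eq_zero [Fintype R] (q : ℕ) [Fact q.Prime] [CharP R q] (k : ℕ)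
    (hab : a ≠ b) :
    ∑ M : Matrix n n R, (M ^ k).trace = 0 := by
  refine sum_eq_zero_of_transvection_invariant q
    (fun x => by rw [nsmul_eq_mul, CharP.cast_eq_zero, zero_mul]) hab _ (fun M => ?_)
    (fun M hM => ?_)
  · rw [conj_transvection_pow hab, trace_mul_cycle, transvection_mul_transvection_same _ _ hab,
      neg_add_cancel, transvection_zero, one_mul]
  · obtain ⟨y, hy, hpow⟩ := hM.exists_add_pow_eq (single_mul_single_of_ne _ _ _ _ hab.symm _) k
    rw [hpow, trace_add, trace_mul_single, row_eq_zero_of_commute_single hy hab, smul_zero,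
      add_zero]

end Transvection

theorem sum_pow_apply_self_eq {n R : Type*} [Fintype n] [DecidableEq n] [CommSemiring R]
    [Fintype R] (k : ℕ) (i j : n) :
    ∑ M : Matrix n n R, (M ^ k) i i = ∑ M : Matrix n n R, (M ^ k) j j := by
  refine Fintype.sum_equiv (reindexAlgEquiv R R (Equiv.swap i j)).toEquiv _ _ fun M => ?_
  change _ = (reindexAlgEquiv R R (Equiv.swap i j) M ^ k) j j
  rw [← map_pow]
  simp

theorem sum_pow_eq_zero_of_charP {n F : Type*} [Fintype n] [DecidableEq n] [Field F] [Fintype F]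
    (q : ℕ) [Fact q.Prime] [CharP F q] (k : ℕ) (hn : 2 ≤ Fintype.card n)
    (h : ¬(Fintype.card n = 2 ∧ q = 2)) :
    ∑ M : Matrix n n F, M ^ k = 0 := by
  ext i j
  rw [sum_apply, zero_apply]
  rcases ne_or_eq i j with hij | rfl
  · exact sum_pow_apply_eq_zero q k hij.symm hij hij.symm
  rcases hn.eq_or_lt with hn2 | hn3
  · obtain ⟨a, b, hab⟩ := Fintype.exists_pair_of_one_lt_card (by omega : 1 < Fintype.card n)
    have htrace : Fintype.card n • ∑ M : Matrix n n F, (M ^ k) i i = 0 := by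
      rw [← sum_trace_pow_eq_zero q k hab]
      simp only [trace, diag, ← sum_comm (γ := n), card_univ.symm, ← sum_const]
      exact sum_congr rfl fun l _ => sum_pow_apply_self_eq k i l
    have hcard : (Fintype.card n : F) ≠ 0 := by
      rw [Ne, CharP.cast_eq_zero_iff F q, ← hn2]
      exact fun hdvd =>
        h ⟨hn2.symm, (Nat.prime_dvd_prime_iff_eq Fact.out Nat.prime_two).mp hdvd⟩
    rw [nsmul_eq_mul] at htrace
    exact (mul_eq_zero.mp htrace).resolve_left hcard
  · obtain ⟨a, ha, b, hb, hab⟩ := one_lt_card.mp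
      (by rw [card_erase_of_mem (mem_univ i), card_univ]; omega : 1 < #(univ.erase i))
    exact sum_pow_apply_eq_zero q k hab (ne_of_mem_erase ha).symm (ne_of_mem_erase hb).symm

theorem sum_univ_eq_zero {m n R : Type*} [Fintype m] [Fintype n] [DecidableEq m]
    [DecidableEq n] [Nontrivial n] [AddCommGroup R] [Fintype R] :
    ∑ A : Matrix m n R, A = 0 := by
  ext i j
  obtain ⟨j', hj'⟩ := exists_ne j
  let e : Matrix m n R ≃ Matrix m n R :=
    { toFun := fun A => A + single i j' (A i j)
      invFun := fun A => A - single i j' (A i j)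
      left_inv := fun A => by simp [hj']
      right_inv := fun A => by simp [hj'] }
  have h := e.sum_comp id
  simp only [id, e, Equiv.coe_fn_mk, sum_add_distrib, add_eq_left] at h
  simpa [sum_apply] using congrFun (congrFun h i) j'

theorem map_castHom_map_val {m n : Type*} {a b : ℕ} [NeZero a] (hab : a ∣ b)
    (N : Matrix m n (ZMod a)) :
    (N.map fun x => (x.val : ZMod b)).map (ZMod.castHom hab (ZMod a)) = N := by
  ext i j
  simp

end Matrix

namespace ZMod

theorem prime_pow_mul_self_eq_zero (p : ℕ) {s : ℕ} (hs : 1 ≤ s) :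
    (p : ZMod (p ^ (s + 1))) ^ s * (p : ZMod (p ^ (s + 1))) ^ s = 0 := by
  rw [← pow_add, ← Nat.cast_pow, natCast_eq_zero_iff]
  exact pow_dvd_pow p (by omega)

variable (p : ℕ) [Fact p.Prime] (s : ℕ)

/-- `ZMod p` as the top base-`p` digit of `ZMod (p ^ (s + 1))`, i.e. as the ideal `(p ^ s)`. -/
def topDigit : ZMod p →+ ZMod (p ^ (s + 1)) where
  toFun z := (p : ZMod (p ^ (s + 1))) ^ s * z.val
  map_zero' := by simp
  map_add' z w := by
    have hzero : (p : ZMod (p ^ (s + 1))) ^ (s + 1) = 0 := by rw [← Nat.cast_pow, natCast_self]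
    rw [val_add, ← mul_add, ← Nat.cast_add]
    conv_rhs => rw [← Nat.mod_add_div (z.val + w.val) p]
    rw [Nat.cast_add, Nat.cast_mul, mul_add, ← mul_assoc, ← pow_succ, hzero, zero_mul, add_zero]

theorem topDigit_apply (z : ZMod p) : topDigit p s z = (p : ZMod (p ^ (s + 1))) ^ s * z.val :=
  rfl

theorem topDigit_injective : Function.Injective (topDigit p s) := by
  refine (injective_iff_map_eq_zero _).mpr fun z hz => ?_
  rw [topDigit_apply, ← Nat.cast_pow, ← Nat.cast_mul, natCast_eq_zero_iff, pow_succ] at hz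
  rw [← val_eq_zero]
  exact Nat.eq_zero_of_dvd_of_lt
    (Nat.dvd_of_mul_dvd_mul_left (pow_pos (Fact.out : p.Prime).pos s) hz) (val_lt z)

theorem castHom_topDigit (z : ZMod p) :
    castHom (pow_dvd_pow p (Nat.le_succ s)) (ZMod (p ^ s)) (topDigit p s z) = 0 := by
  rw [topDigit_apply, map_mul, map_pow, map_natCast, ← Nat.cast_pow, natCast_self, zero_mul]

theorem prime_smul_eq_zero_of_castHom_eq_zero {y : ZMod (p ^ (s + 1))}
    (hy : castHom (pow_dvd_pow p (Nat.le_succ s)) (ZMod (p ^ s)) y = 0) : p • y = 0 := by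
  rw [← natCast_zmod_val y, map_natCast, natCast_eq_zero_iff] at hy
  obtain ⟨c, hc⟩ := hy
  rw [← natCast_zmod_val y, hc, nsmul_eq_mul, ← Nat.cast_mul, natCast_eq_zero_iff, pow_succ']
  exact ⟨c, by ring⟩

end ZMod

namespace Matrix

variable {n : Type*} [Fintype n] [DecidableEq n] [Nontrivial n] {p : ℕ} [Fact p.Prime]

theorem sum_pow_zmod_prime_pow_succ {s : ℕ} (hs : 1 ≤ s) (k : ℕ) :
    ∑ M : Matrix n n (ZMod (p ^ (s + 1))), M ^ k =
      Fintype.card (Matrix n n (ZMod p)) •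
        ∑ N : Matrix n n (ZMod (p ^ s)), (N.map fun x => (x.val : ZMod (p ^ (s + 1)))) ^ k := by
  set π := ZMod.castHom (pow_dvd_pow p (Nat.le_succ s)) (ZMod (p ^ s))
  set ℓ : ZMod (p ^ s) → ZMod (p ^ (s + 1)) := fun x => x.val
  set ψ := ZMod.topDigit p s
  let Φ : Matrix n n (ZMod (p ^ s)) × Matrix n n (ZMod p) → Matrix n n (ZMod (p ^ (s + 1))) :=
    fun NA => NA.1.map ℓ + NA.2.map ψ
  have hΦ : Function.Bijective Φ := by
    refine (Fintype.bijective_iff_injective_and_card Φ).mpr ⟨fun x y hxy => ?_, ?_⟩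
    · have hπℓ : ∀ N : Matrix n n (ZMod (p ^ s)), (N.map ℓ).map π = N :=
        map_castHom_map_val _
      have hπψ : ∀ A : Matrix n n (ZMod p), (A.map ψ).map π = 0 := fun A => by
        ext i j
        exact ZMod.castHom_topDigit p s _
      have h1 : x.1 = y.1 := by
        simpa [Φ, Matrix.map_add, hπℓ, hπψ] using congrArg (Matrix.map · π) hxy
      have h2 : x.2.map ψ = y.2.map ψ := by simpa [Φ, h1] using hxy
      exact Prod.ext h1 (map_injective (ZMod.topDigit_injective p s) h2)
    · simp only [Fintype.card_prod, Fintype.card_matrix, ZMod.card, pow_succ, mul_pow]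
  have hsq : ∀ (A : Matrix n n (ZMod p)) Z, A.map ψ * Z * A.map ψ = 0 := by
    intro A Z
    have : A.map ψ =
        (p : ZMod (p ^ (s + 1))) ^ s • A.map fun z => (z.val : ZMod (p ^ (s + 1))) := by
      ext; rfl
    simp only [this, smul_mul_assoc, mul_smul_comm, smul_smul,
      ZMod.prime_pow_mul_self_eq_zero p hs, zero_smul]
  have hsumψ : ∑ A : Matrix n n (ZMod p), A.map ψ = 0 := by
    have h := map_sum ψ.mapMatrix (fun A : Matrix n n (ZMod p) => A) univ
    rw [sum_univ_eq_zero, map_zero] at h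
    exact h.symm
  have hfiber : ∀ N : Matrix n n (ZMod (p ^ s)),
      ∑ A : Matrix n n (ZMod p), (N.map ℓ + A.map ψ) ^ k =
        Fintype.card (Matrix n n (ZMod p)) • (N.map ℓ) ^ k := by
    intro N
    simp_rw [add_pow_eq_of_mul_mul_eq_zero _ _ (hsq _) k]
    rw [sum_add_distrib, sum_const, card_univ, sum_comm]
    simp_rw [← sum_mul, ← mul_sum, hsumψ, mul_zero, zero_mul, sum_const_zero, add_zero]
  rw [← (Equiv.ofBijective Φ hΦ).sum_comp, Fintype.sum_prod_type, smul_sum]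
  exact sum_congr rfl fun N _ => hfiber N

theorem sum_pow_zmod_prime_pow_succ_eq_zero {s : ℕ} (hs : 1 ≤ s) (k : ℕ)
    (h : p • ∑ N : Matrix n n (ZMod (p ^ s)), N ^ k = 0) :
    ∑ M : Matrix n n (ZMod (p ^ (s + 1))), M ^ k = 0 := by
  set π := ZMod.castHom (pow_dvd_pow p (Nat.le_succ s)) (ZMod (p ^ s))
  set T := ∑ N : Matrix n n (ZMod (p ^ s)), (N.map fun x => (x.val : ZMod (p ^ (s + 1)))) ^ k
  have hT : π.mapMatrix T = ∑ N : Matrix n n (ZMod (p ^ s)), N ^ k := by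
    simp only [T, π, map_sum, map_pow, RingHom.mapMatrix_apply, map_castHom_map_val]
  have hpT : p ^ 2 • T = 0 := by
    rw [← hT] at h
    rw [pow_two, mul_nsmul]
    ext i j
    rw [smul_apply, zero_apply]
    refine ZMod.prime_smul_eq_zero_of_castHom_eq_zero p s ?_
    rw [smul_apply, map_nsmul]
    exact congrFun (congrFun h i) j
  obtain ⟨c, hc⟩ : p ^ 2 ∣ Fintype.card (Matrix n n (ZMod p)) := by
    rw [Fintype.card_matrix, ZMod.card]
    have := Fintype.one_lt_card (α := n)
    exact pow_dvd_pow p (by nlinarith)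
  rw [sum_pow_zmod_prime_pow_succ hs, hc, mul_nsmul, hpT, smul_zero]

theorem prime_smul_sum_pow_zmod_prime_pow_eq_zero {s : ℕ} (hs : 1 ≤ s) (k : ℕ) :
    p • ∑ M : Matrix n n (ZMod (p ^ s)), M ^ k = 0 := by
  induction s, hs using Nat.le_induction with
  | base =>
    ext i j
    rw [smul_apply, nsmul_eq_mul, (ZMod.natCast_eq_zero_iff _ _).mpr (pow_one p).dvd, zero_mul,
      zero_apply]
  | succ s hs ih => rw [sum_pow_zmod_prime_pow_succ_eq_zero hs k ih, smul_zero]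

end Matrix

theorem stmt_5_general (p d s k : ℕ) (hp : p.Prime) [NeZero (p ^ s)] (hd : 2 ≤ d)
    (h : ¬(d = 2 ∧ p = 2 ∧ s = 1)) :
    ∑ M : Matrix (Fin d) (Fin d) (ZMod (p ^ s)), M ^ k = 0 := by
  have := Fact.mk hp
  have := Fin.nontrivial_iff_two_le.mpr hd
  rcases s with _ | _ | s
  · ext i j
    exact Subsingleton.elim (α := ZMod 1) _ _
  · have : Fact (p ^ (0 + 1)).Prime := ⟨by rwa [zero_add, pow_one]⟩
    exact sum_pow_eq_zero_of_charP (p ^ (0 + 1)) k (by simpa using hd) (by simpa using h)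
  · exact sum_pow_zmod_prime_pow_succ_eq_zero (by omega) k
      (prime_smul_sum_pow_zmod_prime_pow_eq_zero (by omega) k)

theorem stmt_5 (p d s k : ℕ) (hp : p.Prime) [NeZero (p ^ s)] (hd : 2 ≤ d) (hs : 1 ≤ s) (hk : 1 ≤ k)
    (h : ¬(d = 2 ∧ p = 2 ∧ s = 1)) :
    ∑ M : Matrix (Fin d) (Fin d) (ZMod (p ^ s)), M ^ k = 0 :=
  stmt_5_general p d s k hp hd h
end

section
/- Let m, n, d, k ≥ 1 with m dividing n. Then the sum of M^k over all d×d integer matrices M with entries in {0,...,n−1} is congruent entrywise modulo m to (n/m)^{d^2} times the sum of M^k over all d×d integer matrices M with entries in {0,...,m−1}. -/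
/-!
Reducing modulo `m`, an entry `x < n` only matters through `x mod m`, and writing
`x = m * a + b` with `a < n / m`, `b < m` identifies `Fin n` with `Fin (n / m) × Fin m` so that
the residue is the second coordinate. Hence each `d × d` matrix over `Fin m` is the reduction of
exactly `(n / m) ^ (d ^ 2)` matrices over `Fin n`, and the congruence follows after the sum of
`k`-th powers is computed in `ZMod m`.
-/

open Finset

theorem Fin.natCast_finProdFinEquiv {q m : ℕ} (y : Fin q × Fin m) :
    ((finProdFinEquiv y : ℕ) : ZMod m) = (y.2 : ℕ) := by
  simp [finProdFinEquiv]

theorem Fintype.sum_pi_fin_natCast_zmod {ι R : Type*} [Fintype ι] [DecidableEq ι]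
    [AddCommMonoid R] {q m n : ℕ} (h : q * m = n) (g : (ι → ZMod m) → R) :
    ∑ f : ι → Fin n, g (fun a => ((f a : ℕ) : ZMod m)) =
      q ^ Fintype.card ι • ∑ f : ι → Fin m, g (fun a => ((f a : ℕ) : ZMod m)) := by
  let e : (ι → Fin q) × (ι → Fin m) ≃ (ι → Fin n) :=
    (Equiv.arrowProdEquivProdArrow _ _ _).symm.trans
      ((Equiv.refl ι).arrowCongr (finProdFinEquiv.trans (finCongr h)))
  have he (p : (ι → Fin q) × (ι → Fin m)) (a : ι) :
      ((e p a : ℕ) : ZMod m) = ((p.2 a : ℕ) : ZMod m) :=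
    Fin.natCast_finProdFinEquiv (p.1 a, p.2 a)
  rw [← e.sum_comp, Fintype.sum_prod_type]
  simp only [he, sum_const, card_univ, Fintype.card_fun, Fintype.card_fin]

theorem Matrix.sum_fin_map_natCast_zmod {ι κ R : Type*} [Fintype ι] [DecidableEq ι]
    [Fintype κ] [DecidableEq κ] [AddCommMonoid R] {q m n : ℕ} (h : q * m = n)
    (g : Matrix ι κ (ZMod m) → R) :
    ∑ M : Matrix ι κ (Fin n), g (M.map fun x => ((x : ℕ) : ZMod m)) =
      q ^ (Fintype.card ι * Fintype.card κ) •
        ∑ M : Matrix ι κ (Fin m), g (M.map fun x => ((x : ℕ) : ZMod m)) := by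
  have hcurry (N : ℕ) (G : Matrix ι κ (Fin N) → R) :
      ∑ f : ι × κ → Fin N, G (Matrix.of (Function.curry f)) = ∑ M : Matrix ι κ (Fin N), G M :=
    Fintype.sum_equiv (Equiv.curry ι κ (Fin N)) _ _ fun _ => rfl
  rw [← hcurry, ← hcurry, ← Fintype.card_prod]
  exact Fintype.sum_pi_fin_natCast_zmod h fun f => g (Matrix.of (Function.curry f))

theorem RingHom.map_sum_matrix_pow_apply {n β R S : Type*} [Fintype n] [DecidableEq n]
    [Semiring R] [Semiring S] (f : R →+* S) (s : Finset β) (A : β → Matrix n n R) (k : ℕ)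
    (i j : n) :
    f ((∑ b ∈ s, A b ^ k) i j) = (∑ b ∈ s, (A b).map f ^ k) i j := by
  simp only [Matrix.sum_apply, map_sum, ← Matrix.map_pow, Matrix.map_apply]

theorem stmt_6_general (m n d k : ℕ) (hdvd : m ∣ n) (i j : Fin d) :
    (∑ M : Matrix (Fin d) (Fin d) (Fin n), (M.map fun x => ((x : ℕ) : ℤ)) ^ k) i j ≡
    ((n / m : ℕ) : ℤ) ^ (d ^ 2) *
      (∑ M : Matrix (Fin d) (Fin d) (Fin m), (M.map fun x => ((x : ℕ) : ℤ)) ^ k) i j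
      [ZMOD m] := by
  rw [← ZMod.intCast_eq_intCast_iff]
  have hreduce := Matrix.sum_fin_map_natCast_zmod (Nat.div_mul_cancel hdvd) fun A => (A ^ k) i j
  simp only [Int.cast_mul, Int.cast_pow, Int.cast_natCast, ← Int.coe_castRingHom,
    RingHom.map_sum_matrix_pow_apply, Matrix.map_map]
  simpa [Function.comp_def, Matrix.sum_apply, sq] using hreduce

theorem stmt_6 (m n d k : ℕ) (hm : 1 ≤ m) (hn : 1 ≤ n) (hd : 1 ≤ d) (hk : 1 ≤ k)
    (hdvd : m ∣ n) (i j : Fin d) :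
    (∑ M : Matrix (Fin d) (Fin d) (Fin n), (M.map fun x => ((x : ℕ) : ℤ)) ^ k) i j ≡
    ((n / m : ℕ) : ℤ) ^ (d ^ 2) *
      (∑ M : Matrix (Fin d) (Fin d) (Fin m), (M.map fun x => ((x : ℕ) : ℤ)) ^ k) i j
      [ZMOD m] :=
  stmt_6_general m n d k hdvd i j
end

section
/- Let s ≥ 2, τ ≥ 1, and β₁,...,β_τ positive integers with some β_i > 1 odd. Then Σ_{x₁,...,x_τ = 0}^{2^s−1} x₁^{β₁}···x_τ^{β_τ} ≡ 0 (mod 2^s). -/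
/-!
The sum factors as `∏ i, ∑ y < 2^s, y ^ β i`, so it suffices that `∑ x : ZMod (2^s), x ^ β = 0`
for one odd `β > 1`. Pairing `x` with `-x` cancels all terms except those with `x = -x`, i.e.
`2x = 0`; for `s ≥ 2` such `x` are multiples of `2^(s-1)`, so `x ^ 2 = 0` and hence `x ^ β = 0`.
-/

open Finset

theorem Fintype.sum_pow_eq_zero_of_odd {R : Type*} [Ring R] [Fintype R] {β : ℕ} (hβ : Odd β)
    (hfix : ∀ x : R, x + x = 0 → x ^ β = 0) : ∑ x : R, x ^ β = 0 := by
  refine sum_ninvolution (fun x => -x) (fun x => by simp [hβ.neg_pow]) (fun x hx hneg => ?_)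
    (fun _ => mem_univ _) neg_neg
  have hx2 : x + x = 0 := by
    nth_rewrite 1 [← hneg]
    exact neg_add_cancel x
  exact absurd (hfix x hx2) hx

namespace ZMod

theorem sq_eq_zero_of_add_self_eq_zero {s : ℕ} (hs : 2 ≤ s) {x : ZMod (2 ^ s)}
    (hx : x + x = 0) : x ^ 2 = 0 := by
  have hpow : 2 ^ s = 2 * 2 ^ (s - 1) := by rw [← pow_succ']; congr 1; omega
  have htwice : 2 ^ s ∣ 2 * x.val := by
    rw [← natCast_eq_zero_iff]; push_cast; rw [natCast_zmod_val, two_mul, hx]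
  obtain ⟨m, hm⟩ : 2 ^ (s - 1) ∣ x.val := Nat.dvd_of_mul_dvd_mul_left two_pos (hpow ▸ htwice)
  have hsq : 2 ^ s ∣ x.val ^ 2 :=
    (pow_dvd_pow 2 (by omega : s ≤ (s - 1) * 2)).trans
      (by rw [hm, mul_pow, pow_mul]; exact dvd_mul_right _ _)
  rw [← natCast_zmod_val x, ← Nat.cast_pow, natCast_eq_zero_iff]
  exact hsq

theorem sum_pow_eq_zero_of_odd {s β : ℕ} (hs : 2 ≤ s) (hβ₁ : 1 < β) (hβ : Odd β) :
    ∑ x : ZMod (2 ^ s), x ^ β = 0 :=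
  Fintype.sum_pow_eq_zero_of_odd hβ fun x hx => by
    rw [show β = β - 2 + 2 by omega, pow_add, sq_eq_zero_of_add_self_eq_zero hs hx, mul_zero]

theorem sum_fin_natCast {M : Type*} [AddCommMonoid M] (n : ℕ) [NeZero n] (f : ZMod n → M) :
    ∑ y : Fin n, f (y : ℕ) = ∑ x, f x := by
  refine Fintype.sum_bijective _ ?_ _ _ fun _ => rfl
  refine (Fintype.bijective_iff_injective_and_card _).2 ⟨fun a b hab => ?_, by simp⟩
  have := congrArg val hab
  rwa [val_cast_of_lt a.isLt, val_cast_of_lt b.isLt, Fin.val_inj] at this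

end ZMod

theorem Int.two_pow_dvd_sum_pow_of_odd {s β : ℕ} (hs : 2 ≤ s) (hβ₁ : 1 < β) (hβ : Odd β) :
    (2 : ℤ) ^ s ∣ ∑ y : Fin (2 ^ s), ((y : ℕ) : ℤ) ^ β := by
  have hcast : ((∑ y : Fin (2 ^ s), ((y : ℕ) : ℤ) ^ β : ℤ) : ZMod (2 ^ s)) = 0 := by
    push_cast
    rw [ZMod.sum_fin_natCast (2 ^ s) (· ^ β), ZMod.sum_pow_eq_zero_of_odd hs hβ₁ hβ]
  rwa [ZMod.intCast_zmod_eq_zero_iff_dvd, Nat.cast_pow, Nat.cast_ofNat] at hcast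

theorem stmt_14_general (s τ : ℕ) (hs : 2 ≤ s) (β : Fin τ → ℕ)
    (h : ∃ i, 1 < β i ∧ Odd (β i)) :
    ∑ x : Fin τ → Fin (2 ^ s), ∏ i, ((x i : ℕ) : ℤ) ^ β i ≡ 0 [ZMOD (2 ^ s)] := by
  obtain ⟨i, hβ₁, hβ⟩ := h
  have hfactor : ∑ x : Fin τ → Fin (2 ^ s), ∏ i, ((x i : ℕ) : ℤ) ^ β i
      = ∏ i, ∑ y : Fin (2 ^ s), ((y : ℕ) : ℤ) ^ β i := by
    rw [prod_univ_sum, Fintype.piFinset_univ]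
  rw [Int.modEq_zero_iff_dvd, hfactor]
  exact (Int.two_pow_dvd_sum_pow_of_odd hs hβ₁ hβ).trans (dvd_prod_of_mem _ (mem_univ i))

theorem stmt_14 (s τ : ℕ) (hs : 2 ≤ s) (hτ : 1 ≤ τ) (β : Fin τ → ℕ)
    (hβ : ∀ i, 0 < β i) (h : ∃ i, 1 < β i ∧ Odd (β i)) :
    ∑ x : Fin τ → Fin (2 ^ s), ∏ i, ((x i : ℕ) : ℤ) ^ β i ≡ 0 [ZMOD (2 ^ s)] :=
  stmt_14_general s τ hs β h
end

section
/- Let p be an odd prime, s ≥ 2, d ≥ 2, r ≥ 2, and let w be a monomial in r non-commuting variables of positive total degree. Then Σ over all r-tuples (A₁,...,A_r) of matrices in M_d(Z/p^sZ) of w(A₁,...,A_r) is the zero matrix. -/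
/-!
Expanding the matrix product entrywise, every entry of `w(A₁, …, A_r)` is a sum over index paths
of monomials in the `r d²` matrix entries, so it suffices that summing such a monomial over all
values of the entries gives `0`. That sum factors as a product, over the `r d² ≥ 2` entries, of
power sums `∑ x : ZMod (p ^ s), x ^ m`, and each power sum is divisible by `p ^ (s - 1)`, by
induction on `s`: modulo `p ^ (s - 1)`, the sum of `i ^ m` over `i < p ^ s` is `p` copies of the
sum over `i < p ^ (s - 1)`. Hence the product is divisible by `p ^ (2 (s - 1))`, which vanishes
in `ZMod (p ^ s)` as `s ≥ 2`.
-/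

open Finset

theorem Nat.sum_range_mul_pow_modEq (a n m : ℕ) :
    ∑ i ∈ range (a * n), i ^ m ≡ a * ∑ i ∈ range n, i ^ m [MOD n] := by
  induction a with
  | zero => simp [Nat.ModEq]
  | succ a ih =>
    rw [add_mul, one_mul, sum_range_add, add_mul, one_mul]
    refine ih.add (Nat.ModEq.sum fun i _ => Nat.ModEq.pow m ?_)
    simp [Nat.ModEq, Nat.add_mod]

theorem Nat.pow_dvd_sum_range_pow (p m s : ℕ) :
    p ^ s ∣ ∑ i ∈ range (p ^ (s + 1)), i ^ m := by
  induction s with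
  | zero => simp
  | succ s ih =>
    have hmod := Nat.sum_range_mul_pow_modEq p (p ^ (s + 1)) m
    rw [← pow_succ'] at hmod
    have hdvd : p ^ (s + 1) ∣ p * ∑ i ∈ range (p ^ (s + 1)), i ^ m := by
      simpa only [← pow_succ'] using mul_dvd_mul_left p ih
    exact Nat.modEq_zero_iff_dvd.mp (hmod.trans (Nat.modEq_zero_iff_dvd.mpr hdvd))

theorem ZMod.sum_eq_sum_range {M : Type*} [AddCommMonoid M] (n : ℕ) [NeZero n]
    (f : ZMod n → M) : ∑ x, f x = ∑ i ∈ range n, f i := by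
  obtain ⟨n, rfl⟩ := Nat.exists_eq_succ_of_ne_zero (NeZero.ne n)
  rw [← Fin.sum_univ_eq_sum_range]
  exact Fintype.sum_congr _ _ fun i => congrArg f (ZMod.natCast_zmod_val i).symm

theorem ZMod.pow_dvd_sum_pow (p s m : ℕ) [NeZero (p ^ (s + 1))] :
    (p : ZMod (p ^ (s + 1))) ^ s ∣ ∑ x, x ^ m := by
  rw [ZMod.sum_eq_sum_range]
  exact_mod_cast Nat.cast_dvd_cast (Nat.pow_dvd_sum_range_pow p m s)

theorem Fintype.sum_pi_prod_comp {R ι κ : Type*} [CommSemiring R] [Fintype R] [Fintype ι]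
    [DecidableEq ι] [Fintype κ] (v : κ → ι) :
    ∑ c : ι → R, ∏ j, c (v j) = ∏ e, ∑ x : R, x ^ Fintype.card {j // v j = e} := by
  simp_rw [← Fintype.prod_fiberwise' v, prod_const, card_univ]
  exact (Fintype.prod_sum _).symm

theorem ZMod.sum_pi_prod_comp_eq_zero (p s : ℕ) [NeZero (p ^ (s + 1))] (hs : 1 ≤ s)
    {ι κ : Type*} [Fintype ι] [DecidableEq ι] [Fintype κ] (hι : 2 ≤ Fintype.card ι)
    (v : κ → ι) : ∑ c : ι → ZMod (p ^ (s + 1)), ∏ j, c (v j) = 0 := by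
  have hdvd : ((p : ZMod (p ^ (s + 1))) ^ s) ^ Fintype.card ι ∣ ∑ c : ι → _, ∏ j, c (v j) := by
    rw [Fintype.sum_pi_prod_comp, ← card_univ, ← prod_const]
    exact prod_dvd_prod_of_dvd _ _ fun e _ => ZMod.pow_dvd_sum_pow p s _
  have hzero : ((p : ZMod (p ^ (s + 1))) ^ s) ^ Fintype.card ι = 0 := by
    have hp : (p : ZMod (p ^ (s + 1))) ^ (s + 1) = 0 := by
      exact_mod_cast ZMod.natCast_self (p ^ (s + 1))
    rw [← pow_mul]
    exact pow_eq_zero_of_le (by nlinarith) hp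
  rwa [hzero, zero_dvd_iff] at hdvd

theorem Matrix.list_prod_ofFn_apply {R n : Type*} [CommSemiring R] [Fintype n] [DecidableEq n] :
    ∀ {k : ℕ} (M : Fin k → Matrix n n R) (a b : n),
      (List.ofFn M).prod a b = ∑ g : Fin k → n,
        (∏ j, M j ((Fin.cons a g : Fin (k + 1) → n) j.castSucc) (g j)) *
          if (Fin.cons a g : Fin (k + 1) → n) (Fin.last k) = b then 1 else 0
  | 0, M, a, b => by simp [Matrix.one_apply, Fin.last]
  | k + 1, M, a, b => by
    rw [List.ofFn_succ, List.prod_cons, Matrix.mul_apply,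
      ← (Fin.consEquiv fun _ => n).sum_comp, Fintype.sum_prod_type]
    refine sum_congr rfl fun c _ => ?_
    rw [Matrix.list_prod_ofFn_apply (fun j => M j.succ) c b, mul_sum]
    refine sum_congr rfl fun g _ => ?_
    simp only [Fin.consEquiv, Equiv.coe_fn_mk, Fin.prod_univ_succ, Fin.castSucc_zero,
      Fin.cons_zero, Fin.cons_succ, ← Fin.succ_castSucc, ← Fin.succ_last, mul_assoc]

theorem ZMod.sum_matrix_prod_comp_eq_zero (p s : ℕ) [NeZero (p ^ (s + 1))] (hs : 1 ≤ s)
    {ι m n κ : Type*} [Fintype ι] [DecidableEq ι] [Fintype m] [DecidableEq m] [Nonempty m]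
    [Fintype n] [DecidableEq n] [Nonempty n] [Fintype κ] (hι : 2 ≤ Fintype.card ι)
    (u : κ → ι) (x : κ → m) (y : κ → n) :
    ∑ A : ι → Matrix m n (ZMod (p ^ (s + 1))), ∏ j, A (u j) (x j) (y j) = 0 := by
  let e : (ι × m × n → ZMod (p ^ (s + 1))) ≃ (ι → Matrix m n (ZMod (p ^ (s + 1)))) :=
    (Equiv.curry _ _ _).trans (Equiv.piCongrRight fun _ => Equiv.curry _ _ _)
  rw [← e.sum_comp]
  refine ZMod.sum_pi_prod_comp_eq_zero p s hs ?_ fun j => (u j, x j, y j)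
  rw [Fintype.card_prod]
  exact hι.trans (Nat.le_mul_of_pos_right _ Fintype.card_pos)

theorem stmt_16_general (p s d r k : ℕ) [NeZero (p ^ s)] (hs : 2 ≤ s)
    (hr : 2 ≤ r) (w : Fin k → Fin r) :
    ∑ A : Fin r → Matrix (Fin d) (Fin d) (ZMod (p ^ s)),
      (List.ofFn fun j => A (w j)).prod = 0 := by
  obtain ⟨s, rfl⟩ : ∃ t, s = t + 1 := ⟨s - 1, by omega⟩
  ext a b
  have : Nonempty (Fin d) := ⟨a⟩
  simp only [Matrix.sum_apply, Matrix.list_prod_ofFn_apply, Matrix.zero_apply]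
  rw [sum_comm]
  refine sum_eq_zero fun g _ => ?_
  rw [← sum_mul, ZMod.sum_matrix_prod_comp_eq_zero p s (by omega) (by rwa [Fintype.card_fin]) w, zero_mul]

theorem stmt_16 (p s d r k : ℕ) (hp : p.Prime) [NeZero (p ^ s)] (hodd : Odd p) (hs : 2 ≤ s)
    (hd : 2 ≤ d) (hr : 2 ≤ r) (hk : 0 < k) (w : Fin k → Fin r) :
    ∑ A : Fin r → Matrix (Fin d) (Fin d) (ZMod (p ^ s)),
      (List.ofFn fun j => A (w j)).prod = 0 :=
  stmt_16_general p s d r k hs hr w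
end

section
/- Let p be a prime, d ≥ 2, r ≥ 1, and let w be a monomial of total degree k in r non-commuting variables. If k < r·d²·(p−1), or if (p−1) does not divide k, then Σ over all r-tuples (A₁,...,A_r) of matrices in M_d(Z/pZ) of w(A₁,...,A_r) is the zero matrix. -/
/-!
The product `w(A₁, …, A_r)` is multilinear in its `k` factors, so expanding every `Aᵢ` in the
basis of matrix units writes it as a combination, with fixed matrix coefficients, of monomials of
degree `k` in the `r·d²` coordinates. Summing a monomial over all coordinate values factors into
one-variable sums `∑ x, x ^ m`, and over a field of `q` elements such a sum vanishes unless
`m > 0` and `q - 1 ∣ m`. Since the exponents add up to `k`, all of them can survive only when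
`k ≥ r·d²·(q - 1)` and `q - 1 ∣ k`.
-/

open Finset

theorem Fintype.prod_comp_eq_prod_pow_card_fiber {ι κ M : Type*} [Fintype ι] [Fintype κ]
    [DecidableEq κ] [CommMonoid M] (f : κ → M) (g : ι → κ) :
    ∏ i, f (g i) = ∏ j, f j ^ Fintype.card {i // g i = j} := by
  rw [← Fintype.prod_fiberwise' g f]
  simp

namespace FiniteField

variable {K : Type*} [Field K] [Fintype K]

local notation "q" => Fintype.card K

theorem sum_pow_eq_zero {i : ℕ} (h : i = 0 ∨ ¬ q - 1 ∣ i) : ∑ x : K, x ^ i = 0 := by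
  classical
  rcases h with rfl | hdvd
  · simp
  have hi : i ≠ 0 := by rintro rfl; exact hdvd (dvd_zero _)
  calc ∑ x : K, x ^ i = ∑ x : Kˣ, (x ^ i : K) := by
        rw [Fintype.sum_eq_add_sum_compl 0, zero_pow hi, zero_add,
          ← Fintype.sum_equiv unitsEquivNeZero.symm (fun x => (x : K) ^ i) _ (fun _ => rfl)]
        exact Finset.sum_subtype _ (by simp) _
    _ = 0 := by rw [sum_pow_units, if_neg hdvd]

theorem sum_prod_comp_eq_zero {σ ι : Type*} [Fintype σ] [DecidableEq σ] [Fintype ι]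
    (v : ι → σ)
    (h : Fintype.card ι < Fintype.card σ * (q - 1) ∨ ¬ q - 1 ∣ Fintype.card ι) :
    ∑ f : σ → K, ∏ i, f (v i) = 0 := by
  set m : σ → ℕ := fun s => Fintype.card {i // v i = s}
  have hm : ∑ s, m s = Fintype.card ι := by
    rw [← Fintype.card_sigma, Fintype.card_congr (Equiv.sigmaFiberEquiv v)]
  obtain ⟨s, hs⟩ : ∃ s, m s = 0 ∨ ¬ q - 1 ∣ m s := by
    by_contra! hall
    have hle : Fintype.card σ * (q - 1) ≤ Fintype.card ι := by
      calc Fintype.card σ * (q - 1) = ∑ _s : σ, (q - 1) := by simp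
        _ ≤ ∑ s, m s := Finset.sum_le_sum fun s _ =>
            Nat.le_of_dvd (Nat.pos_of_ne_zero (hall s).1) (hall s).2
        _ = Fintype.card ι := hm
    have hdvd : q - 1 ∣ Fintype.card ι := hm ▸ Finset.dvd_sum fun s _ => (hall s).2
    exact h.elim hle.not_gt (· hdvd)
  calc ∑ f : σ → K, ∏ i, f (v i) = ∏ s, ∑ x : K, x ^ m s := by
        simp only [Fintype.prod_comp_eq_prod_pow_card_fiber _ v, Fintype.prod_sum]; rfl
    _ = 0 := Finset.prod_eq_zero (mem_univ s) (sum_pow_eq_zero hs)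

end FiniteField

theorem MultilinearMap.sum_comp_eq_zero {K V M σ ι β : Type*} [Field K] [Fintype K]
    [AddCommGroup V] [Module K V] [Fintype V] [AddCommGroup M] [Module K M]
    [Fintype σ] [DecidableEq σ] [Fintype ι] [Fintype β]
    (f : MultilinearMap K (fun _ : ι => V) M) (b : Module.Basis β K V) (w : ι → σ)
    (h : Fintype.card ι < Fintype.card σ * Fintype.card β * (Fintype.card K - 1) ∨
      ¬ Fintype.card K - 1 ∣ Fintype.card ι) :
    ∑ A : σ → V, f (fun i => A (w i)) = 0 := by
  classical
  have expand : ∀ A : σ → V, f (fun i => A (w i)) =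
      ∑ e : ι → β, (∏ i, b.repr (A (w i)) (e i)) • f (fun i => b (e i)) := by
    intro A
    calc f (fun i => A (w i)) = f (fun i => ∑ j, b.repr (A (w i)) j • b j) := by
          simp only [b.sum_repr]
      _ = ∑ e : ι → β, f (fun i => b.repr (A (w i)) (e i) • b (e i)) := f.map_sum _
      _ = _ := by simp only [f.map_smul_univ]
  let coords : (σ → V) ≃ (σ × β → K) :=
    (Equiv.piCongrRight fun _ => b.equivFun).trans (Equiv.curry σ β K).symm
  rw [Finset.sum_congr rfl fun A _ => expand A, Finset.sum_comm]
  refine Finset.sum_eq_zero fun e _ => ?_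
  rw [← Finset.sum_smul, Fintype.sum_equiv coords (fun A => ∏ i, b.repr (A (w i)) (e i))
    (fun g => ∏ i, g (w i, e i)) fun _ => rfl,
    FiniteField.sum_prod_comp_eq_zero _ (by simpa [Fintype.card_prod, mul_assoc] using h),
    zero_smul]

theorem stmt_17_general (p d r k : ℕ) (hp : p.Prime) [NeZero p]
    (w : Fin k → Fin r) (h : k < r * d ^ 2 * (p - 1) ∨ ¬(p - 1) ∣ k) :
    ∑ A : Fin r → Matrix (Fin d) (Fin d) (ZMod p),
      (List.ofFn fun j => A (w j)).prod = 0 := by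
  have := Fact.mk hp
  have hcard : Fintype.card (Fin k) < Fintype.card (Fin r) * Fintype.card (Fin d × Fin d) *
      (Fintype.card (ZMod p) - 1) ∨ ¬ Fintype.card (ZMod p) - 1 ∣ Fintype.card (Fin k) := by
    simpa [sq] using h
  simpa only [MultilinearMap.mkPiAlgebraFin_apply] using
    (MultilinearMap.mkPiAlgebraFin (ZMod p) k (Matrix (Fin d) (Fin d) (ZMod p))).sum_comp_eq_zero
      (Matrix.stdBasis (ZMod p) (Fin d) (Fin d)) w hcard

theorem stmt_17 (p d r k : ℕ) (hp : p.Prime) [NeZero p] (hd : 2 ≤ d) (hr : 1 ≤ r)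
    (w : Fin k → Fin r) (h : k < r * d ^ 2 * (p - 1) ∨ ¬(p - 1) ∣ k) :
    ∑ A : Fin r → Matrix (Fin d) (Fin d) (ZMod p),
      (List.ofFn fun j => A (w j)).prod = 0 :=
  stmt_17_general p d r k hp w h
end
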